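/- arXiv:1209.5687 — 4 statements merged into one kernel-verified Lean document; each statement's English description precedes it below -/
import Mathlib

section
/- Let α, β : ℝ → ℝ be continuous with α(u) > 0 and β(u) > 0 for all u, let u : [0,T] → ℝ be continuous, and let m : [0,T] → ℝ be differentiable satisfying m'(t) = α(u(t))(1 - m(t)) - β(u(t)) m(t) for all t ∈ [0,T]. If 0 ≤ m(0) ≤ 1, then 0 ≤ m(t) ≤ 1 for all t ∈ [0,T]. -/
/-!
At `m = 0` the right-hand side equals `α (u t) > 0` and at `m = 1` it equals `-β (u t) < 0`, so
the field points strictly into `[0, 1]` at both ends; the fencing theorem for derivatives then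
keeps `m` from crossing either barrier.
-/

open Set

theorem le_of_hasDerivAt_neg_of_eq {f f' : ℝ → ℝ} {a b c : ℝ}
    (hf : ∀ x ∈ Icc a b, HasDerivAt f (f' x) x) (ha : f a ≤ c)
    (hc : ∀ x ∈ Ico a b, f x = c → f' x < 0) : ∀ x ∈ Icc a b, f x ≤ c :=
  image_le_of_deriv_right_lt_deriv_boundary
    (fun x hx => (hf x hx).continuousAt.continuousWithinAt)
    (fun x hx => (hf x (Ico_subset_Icc_self hx)).hasDerivWithinAt) ha
    (fun _ => hasDerivAt_const _ c) hc

theorem gating_invariance_general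
    (T : ℝ)
    (α β : ℝ → ℝ)
    (hαpos : ∀ v, 0 < α v) (hβpos : ∀ v, 0 < β v)
    (u m : ℝ → ℝ)
    (hm : ∀ t ∈ Set.Icc (0:ℝ) T,
      HasDerivAt m (α (u t) * (1 - m t) - β (u t) * m t) t)
    (h0 : 0 ≤ m 0) (h1 : m 0 ≤ 1) :
    ∀ t ∈ Set.Icc (0:ℝ) T, 0 ≤ m t ∧ m t ≤ 1 := by
  have hlower : ∀ t ∈ Icc (0:ℝ) T, -m t ≤ 0 :=
    le_of_hasDerivAt_neg_of_eq (fun t ht => (hm t ht).neg) (by linarith) fun t _ hzero => by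
      have hm0 : m t = 0 := neg_eq_zero.mp hzero
      simpa [hm0] using hαpos (u t)
  have hupper : ∀ t ∈ Icc (0:ℝ) T, m t ≤ 1 :=
    le_of_hasDerivAt_neg_of_eq hm h1 fun t _ hone => by
      simpa [hone] using hβpos (u t)
  exact fun t ht => ⟨neg_nonpos.mp (hlower t ht), hupper t ht⟩

/-- Proposition 1 (gating variable invariance): if the gating variable `m`
solves `m' = α(u(t))(1-m) - β(u(t)) m` on `[0,T]` with continuous positive
rates and `m 0 ∈ [0,1]`, then `m t ∈ [0,1]` on `[0,T]`. -/
theorem gating_invariance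
    (T : ℝ) (hT : 0 < T)
    (α β : ℝ → ℝ) (hα : Continuous α) (hβ : Continuous β)
    (hαpos : ∀ v, 0 < α v) (hβpos : ∀ v, 0 < β v)
    (u m : ℝ → ℝ)
    (hu : ContinuousOn u (Set.Icc 0 T))
    (hm : ∀ t ∈ Set.Icc (0:ℝ) T,
      HasDerivAt m (α (u t) * (1 - m t) - β (u t) * m t) t)
    (h0 : 0 ≤ m 0) (h1 : m 0 ≤ 1) :
    ∀ t ∈ Set.Icc (0:ℝ) T, 0 ≤ m t ∧ m t ≤ 1 :=
  gating_invariance_general T α β hαpos hβpos u m hm h0 h1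
end

section
/- Under the hypotheses of the previous energy estimate for the cable-soma problem, the weighted energy E(t) = ∫₀ᴸ a u² dx + (μ/η) u(L,t)² satisfies E(t) ≤ E(0) · exp(−2 g_min t / C) for all t ∈ [0,T]. -/
open intervalIntegral

section CSEDAux
open MeasureTheory Set

noncomputable def csedUt (u : ℝ → ℝ → ℝ) (x t : ℝ) : ℝ :=
  fderiv ℝ (fun p : ℝ × ℝ => u p.1 p.2) (x, t) (0, 1)

noncomputable def csedUx (u : ℝ → ℝ → ℝ) (x t : ℝ) : ℝ :=
  fderiv ℝ (fun p : ℝ × ℝ => u p.1 p.2) (x, t) (1, 0)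

lemma csed_hasDerivAt_ut {u : ℝ → ℝ → ℝ} (hu : Differentiable ℝ (fun p : ℝ × ℝ => u p.1 p.2))
    (x t : ℝ) : HasDerivAt (fun s => u x s) (csedUt u x t) t := by
  have h := (hu (x, t)).hasFDerivAt
  have h2 : HasDerivAt (fun s : ℝ => ((x, s) : ℝ × ℝ)) ((0 : ℝ), (1 : ℝ)) t :=
    HasDerivAt.prodMk (hasDerivAt_const t x) (hasDerivAt_id t)
  exact h.comp_hasDerivAt t h2

lemma csed_hasDerivAt_ux {u : ℝ → ℝ → ℝ} (hu : Differentiable ℝ (fun p : ℝ × ℝ => u p.1 p.2))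
    (x t : ℝ) : HasDerivAt (fun z => u z t) (csedUx u x t) x := by
  have h := (hu (x, t)).hasFDerivAt
  have h2 : HasDerivAt (fun z : ℝ => ((z, t) : ℝ × ℝ)) ((1 : ℝ), (0 : ℝ)) x :=
    HasDerivAt.prodMk (hasDerivAt_id x) (hasDerivAt_const x t)
  exact h.comp_hasDerivAt x h2

lemma csed_contDiff_ut {u : ℝ → ℝ → ℝ} (hu : ContDiff ℝ (⊤ : ℕ∞) (fun p : ℝ × ℝ => u p.1 p.2)) :
    ContDiff ℝ (⊤ : ℕ∞) (fun p : ℝ × ℝ => csedUt u p.1 p.2) :=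
  (hu.fderiv_right (by simp)).clm_apply contDiff_const

lemma csed_contDiff_ux {u : ℝ → ℝ → ℝ} (hu : ContDiff ℝ (⊤ : ℕ∞) (fun p : ℝ × ℝ => u p.1 p.2)) :
    ContDiff ℝ (⊤ : ℕ∞) (fun p : ℝ × ℝ => csedUx u p.1 p.2) :=
  (hu.fderiv_right (by simp)).clm_apply contDiff_const

end CSEDAux

open MeasureTheory Set

set_option maxHeartbeats 2000000

/-- Exponential decay of the weighted energy for the cable-soma problem:
`E(t) ≤ E(0) exp(−2 g_min t / C)`. -/
theorem cable_soma_energy_decay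
    (L T μ η C amin gmin : ℝ) (hL : 0 < L) (hT : 0 < T)
    (hμ : 0 < μ) (hη : 0 < η) (hC : 0 < C)
    (a : ℝ → ℝ) (ha : ContDiff ℝ (⊤ : ℕ∞) a) (hamin : 0 < amin) (haLB : ∀ x, amin ≤ a x)
    (g : ℝ → ℝ → ℝ) (hgcont : Continuous (fun p : ℝ × ℝ => g p.1 p.2))
    (hgmin : 0 < gmin) (hgLB : ∀ x t, gmin ≤ g x t)
    (u : ℝ → ℝ → ℝ) (hu : ContDiff ℝ (⊤ : ℕ∞) (fun p : ℝ × ℝ => u p.1 p.2))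
    (hpde : ∀ x ∈ Set.Icc (0:ℝ) L, ∀ t ∈ Set.Icc (0:ℝ) T,
      a x * deriv (fun s => u x s) t
        = μ * deriv (fun y => (a y) ^ 2 * deriv (fun z => u z t) y) x
          - (a x / C) * g x t * u x t)
    (hbc0 : ∀ t ∈ Set.Icc (0:ℝ) T, deriv (fun z => u z t) 0 = 0)
    (hbcL : ∀ t ∈ Set.Icc (0:ℝ) T,
      deriv (fun s => u L s) t
        = - η * (a L) ^ 2 * deriv (fun z => u z t) L - (1 / C) * g L t * u L t) :
    ∀ t ∈ Set.Icc (0:ℝ) T,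
      (∫ x in (0:ℝ)..L, a x * (u x t) ^ 2) + (μ / η) * (u L t) ^ 2
        ≤ ((∫ x in (0:ℝ)..L, a x * (u x 0) ^ 2) + (μ / η) * (u L 0) ^ 2)
            * Real.exp (-2 * gmin * t / C) := by
  intro t ht
  have hudiff : Differentiable ℝ (fun p : ℝ × ℝ => u p.1 p.2) := hu.differentiable (by simp)
  have hut : ∀ x τ : ℝ, HasDerivAt (fun s => u x s) (csedUt u x τ) τ :=
    csed_hasDerivAt_ut hudiff
  have hux : ∀ x τ : ℝ, HasDerivAt (fun z => u z τ) (csedUx u x τ) x :=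
    csed_hasDerivAt_ux hudiff
  have ca : Continuous a := ha.continuous
  have cu : Continuous (fun p : ℝ × ℝ => u p.1 p.2) := hu.continuous
  have cut : Continuous (fun p : ℝ × ℝ => csedUt u p.1 p.2) := (csed_contDiff_ut hu).continuous
  have cdux : ContDiff ℝ (⊤ : ℕ∞) (fun p : ℝ × ℝ => csedUx u p.1 p.2) := csed_contDiff_ux hu
  have cux : Continuous (fun p : ℝ × ℝ => csedUx u p.1 p.2) := cdux.continuous
  set E : ℝ → ℝ := fun τ => (∫ x in (0:ℝ)..L, a x * u x τ ^ 2) + (μ / η) * u L τ ^ 2 with hEdef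
  set G : ℝ → ℝ := fun τ => (∫ x in (0:ℝ)..L, 2 * a x * u x τ * csedUt u x τ)
      + (μ / η) * (2 * u L τ * csedUt u L τ) with hGdef
  -- continuity of the integrand (x, s) ↦ 2 a(x) u(x,s) uₜ(x,s)
  have hHc : Continuous (fun p : ℝ × ℝ => 2 * a p.1 * u p.1 p.2 * csedUt u p.1 p.2) :=
    ((continuous_const.mul (ca.comp continuous_fst)).mul cu).mul cut
  -- continuity of E
  have hFcont : Continuous (fun τ : ℝ => ∫ x in (0:ℝ)..L, a x * u x τ ^ 2) := by
    apply intervalIntegral.continuous_parametric_intervalIntegral_of_continuous' (μ := volume)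
      (f := fun τ x => a x * u x τ ^ 2) ?_ 0 L
    have : Continuous (fun p : ℝ × ℝ => a p.2 * u p.2 p.1 ^ 2) :=
      (ca.comp continuous_snd).mul
        ((cu.comp (continuous_snd.prodMk continuous_fst)).pow 2)
    exact this
  have hEcont : Continuous E := by
    rw [hEdef]
    exact hFcont.add (continuous_const.mul
      ((cu.comp (continuous_const.prodMk continuous_id)).pow 2))
  -- representation of the spatial integral as a primitive
  have hF0 : ∀ τ : ℝ, 0 ≤ τ →
      (∫ x in (0:ℝ)..L, a x * u x τ ^ 2)
        = (∫ x in (0:ℝ)..L, a x * u x 0 ^ 2)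
          + ∫ s in (0:ℝ)..τ, (∫ x in (0:ℝ)..L, 2 * a x * u x s * csedUt u x s) := by
    intro τ hτ
    have hfx : ∀ x s : ℝ, HasDerivAt (fun s' => a x * u x s' ^ 2)
        (2 * a x * u x s * csedUt u x s) s := by
      intro x s
      have h1 := ((hut x s).pow 2).const_mul (a x)
      exact h1.congr_deriv (by ring)
    have hutx : ∀ x : ℝ, Continuous (fun s => csedUt u x s) :=
      fun x => cut.comp (continuous_const.prodMk continuous_id)
    have hux' : ∀ x : ℝ, Continuous (fun s => u x s) :=
      fun x => cu.comp (continuous_const.prodMk continuous_id)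
    have hft : ∀ x : ℝ, a x * u x τ ^ 2 - a x * u x 0 ^ 2
        = ∫ s in (0:ℝ)..τ, 2 * a x * u x s * csedUt u x s := by
      intro x
      rw [intervalIntegral.integral_eq_sub_of_hasDerivAt (fun s _ => hfx x s) ?_]
      exact ((continuous_const.mul (hux' x)).mul (hutx x)).intervalIntegrable 0 τ
    have hint1 : IntervalIntegrable (fun x => a x * u x τ ^ 2) volume 0 L :=
      ((ca.mul ((cu.comp (continuous_id.prodMk continuous_const)).pow 2))).intervalIntegrable 0 L
    have hint0 : IntervalIntegrable (fun x => a x * u x 0 ^ 2) volume 0 L :=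
      ((ca.mul ((cu.comp (continuous_id.prodMk continuous_const)).pow 2))).intervalIntegrable 0 L
    have hsub : (∫ x in (0:ℝ)..L, a x * u x τ ^ 2) - (∫ x in (0:ℝ)..L, a x * u x 0 ^ 2)
        = ∫ x in (0:ℝ)..L, (a x * u x τ ^ 2 - a x * u x 0 ^ 2) :=
      (intervalIntegral.integral_sub hint1 hint0).symm
    have hswap : (∫ x in (0:ℝ)..L, ∫ s in (0:ℝ)..τ, 2 * a x * u x s * csedUt u x s)
        = ∫ s in (0:ℝ)..τ, ∫ x in (0:ℝ)..L, 2 * a x * u x s * csedUt u x s := by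
      rw [intervalIntegral.integral_of_le hL.le, intervalIntegral.integral_of_le hτ]
      simp_rw [intervalIntegral.integral_of_le hτ, intervalIntegral.integral_of_le hL.le]
      apply MeasureTheory.integral_integral_swap
      have : Integrable (Function.uncurry fun x s => 2 * a x * u x s * csedUt u x s)
          ((volume.restrict (Set.Ioc (0:ℝ) L)).prod (volume.restrict (Set.Ioc (0:ℝ) τ))) := by
        rw [Measure.prod_restrict, ← Measure.volume_eq_prod]
        apply MeasureTheory.IntegrableOn.mono_set
          (t := Set.Icc (0:ℝ) L ×ˢ Set.Icc (0:ℝ) τ)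
        · exact hHc.continuousOn.integrableOn_compact (isCompact_Icc.prod isCompact_Icc)
        · exact Set.prod_mono Set.Ioc_subset_Icc_self Set.Ioc_subset_Icc_self
      exact this
    have hcongr : (∫ x in (0:ℝ)..L, (a x * u x τ ^ 2 - a x * u x 0 ^ 2))
        = ∫ x in (0:ℝ)..L, ∫ s in (0:ℝ)..τ, 2 * a x * u x s * csedUt u x s := by
      apply intervalIntegral.integral_congr
      intro x _
      exact hft x
    have := hsub.trans (hcongr.trans hswap)
    linarith [this]
  -- continuity of the s ↦ spatial integral of the derivative
  have hG0cont : Continuous (fun s : ℝ => ∫ x in (0:ℝ)..L, 2 * a x * u x s * csedUt u x s) := by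
    apply intervalIntegral.continuous_parametric_intervalIntegral_of_continuous' (μ := volume)
      (f := fun s x => 2 * a x * u x s * csedUt u x s) ?_ 0 L
    exact hHc.comp continuous_swap
  -- derivative of E on (0, ∞)
  have hED : ∀ τ : ℝ, 0 < τ → HasDerivAt E (G τ) τ := by
    intro τ hτ
    have h1 : HasDerivAt (fun r : ℝ => (∫ x in (0:ℝ)..L, a x * u x 0 ^ 2)
        + ∫ s in (0:ℝ)..r, (∫ x in (0:ℝ)..L, 2 * a x * u x s * csedUt u x s))
        (∫ x in (0:ℝ)..L, 2 * a x * u x τ * csedUt u x τ) τ := by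
      have h := intervalIntegral.integral_hasDerivAt_right
        (hG0cont.intervalIntegrable 0 τ)
        hG0cont.aestronglyMeasurable.stronglyMeasurableAtFilter
        hG0cont.continuousAt
      exact h.const_add _
    have h2 : HasDerivAt (fun r : ℝ => ∫ x in (0:ℝ)..L, a x * u x r ^ 2)
        (∫ x in (0:ℝ)..L, 2 * a x * u x τ * csedUt u x τ) τ := by
      apply h1.congr_of_eventuallyEq
      filter_upwards [eventually_gt_nhds hτ] with r hr
      rw [hF0 r hr.le]
    have h3 : HasDerivAt (fun r : ℝ => (μ / η) * u L r ^ 2)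
        ((μ / η) * (2 * u L τ * csedUt u L τ)) τ := by
      have h := ((hut L τ).pow 2).const_mul (μ / η)
      exact h.congr_deriv (by ring)
    rw [hEdef, hGdef]
    exact h2.add h3
  -- the energy inequality for the derivative
  have hGle : ∀ τ ∈ Set.Icc (0:ℝ) T, G τ ≤ -(2 * gmin / C) * E τ := by
    intro τ hτ
    have huxd : ∀ x : ℝ, deriv (fun z => u z τ) x = csedUx u x τ := fun x => (hux x τ).deriv
    -- smoothness of w(y) = a(y)² uₓ(y, τ)
    have hw : ContDiff ℝ (⊤ : ℕ∞) (fun y => a y ^ 2 * csedUx u y τ) :=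
      (ha.pow 2).mul (cdux.comp (contDiff_id.prodMk contDiff_const))
    have hwc : Continuous (fun y => a y ^ 2 * csedUx u y τ) := hw.continuous
    have hwd : Continuous (deriv (fun y => a y ^ 2 * csedUx u y τ)) :=
      hw.continuous_deriv (by simp)
    have cuτ : Continuous (fun x => u x τ) := cu.comp (continuous_id.prodMk continuous_const)
    have cuxτ : Continuous (fun x => csedUx u x τ) :=
      cux.comp (continuous_id.prodMk continuous_const)
    have cgτ : Continuous (fun x => g x τ) := hgcont.comp (continuous_id.prodMk continuous_const)
    -- PDE in terms of csed derivatives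
    have hpde' : ∀ x ∈ Set.Icc (0:ℝ) L,
        a x * csedUt u x τ = μ * deriv (fun y => a y ^ 2 * csedUx u y τ) x
          - (a x / C) * g x τ * u x τ := by
      intro x hx
      have h := hpde x hx τ hτ
      rw [(hut x τ).deriv] at h
      have heq : (fun y => a y ^ 2 * deriv (fun z => u z τ) y)
          = (fun y => a y ^ 2 * csedUx u y τ) := by
        funext y
        rw [huxd y]
      rw [heq] at h
      exact h
    -- boundary values
    have hux0 : csedUx u 0 τ = 0 := by rw [← huxd 0]; exact hbc0 τ hτ
    have hutL : csedUt u L τ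
        = -η * a L ^ 2 * csedUx u L τ - (1 / C) * g L τ * u L τ := by
      rw [← (hut L τ).deriv, hbcL τ hτ, huxd L]
    -- integration by parts
    have hibp : (∫ x in (0:ℝ)..L, (2 * μ * u x τ) * deriv (fun y => a y ^ 2 * csedUx u y τ) x)
        = (2 * μ * u L τ) * (a L ^ 2 * csedUx u L τ)
          - (2 * μ * u 0 τ) * (a 0 ^ 2 * csedUx u 0 τ)
          - ∫ x in (0:ℝ)..L, (2 * μ * csedUx u x τ) * (a x ^ 2 * csedUx u x τ) := by
      apply intervalIntegral.integral_mul_deriv_eq_deriv_mul_of_hasDerivAt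
      · exact (continuous_const.mul cuτ).continuousOn
      · exact hwc.continuousOn
      · intro x _
        exact (hux x τ).const_mul (2 * μ)
      · intro x _
        exact ((hw.differentiable (by simp)) x).hasDerivAt
      · exact (continuous_const.mul cuxτ).intervalIntegrable 0 L
      · exact hwd.intervalIntegrable 0 L
    -- split the spatial integral using the PDE
    have hint1 : IntervalIntegrable
        (fun x => (2 * μ * u x τ) * deriv (fun y => a y ^ 2 * csedUx u y τ) x) volume 0 L :=
      ((continuous_const.mul cuτ).mul hwd).intervalIntegrable 0 L
    have hint2 : IntervalIntegrable
        (fun x => (2 / C) * (a x * g x τ * u x τ ^ 2)) volume 0 L :=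
      (continuous_const.mul ((ca.mul cgτ).mul (cuτ.pow 2))).intervalIntegrable 0 L
    have hsplit : (∫ x in (0:ℝ)..L, 2 * a x * u x τ * csedUt u x τ)
        = (∫ x in (0:ℝ)..L, (2 * μ * u x τ) * deriv (fun y => a y ^ 2 * csedUx u y τ) x)
          - ∫ x in (0:ℝ)..L, (2 / C) * (a x * g x τ * u x τ ^ 2) := by
      rw [← intervalIntegral.integral_sub hint1 hint2]
      apply intervalIntegral.integral_congr
      intro x hx
      rw [Set.uIcc_of_le hL.le] at hx
      have h := hpde' x hx
      have hCne : C ≠ 0 := ne_of_gt hC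
      field_simp at h ⊢
      linear_combination (u x τ) * h
    -- nonnegativity of the dissipative term
    have hI1 : 0 ≤ ∫ x in (0:ℝ)..L, (2 * μ * csedUx u x τ) * (a x ^ 2 * csedUx u x τ) := by
      apply intervalIntegral.integral_nonneg hL.le
      intro x _
      nlinarith [sq_nonneg (a x * csedUx u x τ), hμ.le, sq_nonneg (csedUx u x τ), sq_nonneg (a x)]
    -- lower bound of the reaction term
    have hint3 : IntervalIntegrable (fun x => gmin * (a x * u x τ ^ 2)) volume 0 L :=
      (continuous_const.mul (ca.mul (cuτ.pow 2))).intervalIntegrable 0 L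
    have hint4 : IntervalIntegrable (fun x => a x * g x τ * u x τ ^ 2) volume 0 L :=
      ((ca.mul cgτ).mul (cuτ.pow 2)).intervalIntegrable 0 L
    have hI2 : gmin * (∫ x in (0:ℝ)..L, a x * u x τ ^ 2)
        ≤ ∫ x in (0:ℝ)..L, a x * g x τ * u x τ ^ 2 := by
      rw [← intervalIntegral.integral_const_mul]
      apply intervalIntegral.integral_mono_on hL.le hint3 hint4
      intro x _
      have h1 : gmin ≤ g x τ := hgLB x τ
      have h2 : (0:ℝ) ≤ a x := le_trans hamin.le (haLB x)
      nlinarith [mul_nonneg h2 (sq_nonneg (u x τ))]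
    -- exact formula for G τ
    have hGeq : G τ
        = -(∫ x in (0:ℝ)..L, (2 * μ * csedUx u x τ) * (a x ^ 2 * csedUx u x τ))
          - (∫ x in (0:ℝ)..L, (2 / C) * (a x * g x τ * u x τ ^ 2))
          - (μ / η) * (2 / C) * (g L τ * u L τ ^ 2) := by
      simp only [hGdef]
      rw [hsplit, hibp, hutL, hux0]
      field_simp
      ring
    have hconst : (∫ x in (0:ℝ)..L, (2 / C) * (a x * g x τ * u x τ ^ 2))
        = (2 / C) * ∫ x in (0:ℝ)..L, a x * g x τ * u x τ ^ 2 :=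
      intervalIntegral.integral_const_mul _ _
    -- final estimate
    have c1 : (0:ℝ) < 2 / C := by positivity
    have c2 : (0:ℝ) < μ / η := by positivity
    have e1 : (2 / C) * (gmin * (∫ x in (0:ℝ)..L, a x * u x τ ^ 2))
        ≤ (2 / C) * (∫ x in (0:ℝ)..L, a x * g x τ * u x τ ^ 2) :=
      mul_le_mul_of_nonneg_left hI2 c1.le
    have e2 : (μ / η) * (2 / C) * (gmin * u L τ ^ 2)
        ≤ (μ / η) * (2 / C) * (g L τ * u L τ ^ 2) := by
      have h1 : gmin * u L τ ^ 2 ≤ g L τ * u L τ ^ 2 := by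
        nlinarith [hgLB L τ, sq_nonneg (u L τ)]
      exact mul_le_mul_of_nonneg_left h1 (by positivity)
    have hkey : -(2 * gmin / C) * E τ
        = -((2 / C) * (gmin * (∫ x in (0:ℝ)..L, a x * u x τ ^ 2)))
          - (μ / η) * (2 / C) * (gmin * u L τ ^ 2) := by
      simp only [hEdef]
      field_simp
      ring
    rw [hGeq, hconst, hkey]
    linarith
  -- Grönwall via monotonicity of E(τ) exp(K τ)
  set K : ℝ := 2 * gmin / C with hKdef
  have hKpos : 0 < K := by positivity
  have hΦD : ∀ τ ∈ Set.Ioo (0:ℝ) T,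
      HasDerivAt (fun s => E s * Real.exp (K * s))
        ((G τ + K * E τ) * Real.exp (K * τ)) τ := by
    intro τ hτ
    have h1 : HasDerivAt (fun s : ℝ => K * s) K τ := by
      simpa using (hasDerivAt_id τ).const_mul K
    have h2 : HasDerivAt (fun s : ℝ => Real.exp (K * s)) (Real.exp (K * τ) * K) τ := h1.exp
    have := (hED τ hτ.1).mul h2
    exact this.congr_deriv (by ring)
  have hanti : AntitoneOn (fun s => E s * Real.exp (K * s)) (Set.Icc 0 T) := by
    apply antitoneOn_of_deriv_nonpos (convex_Icc 0 T)
    · exact (hEcont.mul (Real.continuous_exp.comp (continuous_const.mul continuous_id))).continuousOn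
    · intro τ hτ
      rw [interior_Icc] at hτ
      exact ((hΦD τ hτ).differentiableAt).differentiableWithinAt
    · intro τ hτ
      rw [interior_Icc] at hτ
      rw [(hΦD τ hτ).deriv]
      have h1 := hGle τ (Set.mem_Icc.2 ⟨hτ.1.le, hτ.2.le⟩)
      have h2 : (0:ℝ) < Real.exp (K * τ) := Real.exp_pos _
      nlinarith
  have hle : E t * Real.exp (K * t) ≤ E 0 := by
    have h0 : (0:ℝ) ∈ Set.Icc (0:ℝ) T := Set.left_mem_Icc.2 hT.le
    have := hanti h0 ht ht.1
    simpa using this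
  have hexp : Real.exp (-2 * gmin * t / C) = (Real.exp (K * t))⁻¹ := by
    rw [← Real.exp_neg]
    congr 1
    rw [hKdef]
    ring
  show E t ≤ E 0 * Real.exp (-2 * gmin * t / C)
  rw [hexp, ← div_eq_mul_inv, le_div_iff₀ (Real.exp_pos _)]
  exact hle
end

section
/- Let P be diagonal positive definite, Q satisfy Q + Qᵀ = diag(−1,0,…,0,1), A = diag(a₀,…,a_N) with all aᵢ > 0, G(t) diagonal with entries gᵢ(t) ≥ g_min > 0, and let μ, η, C > 0. Suppose u(t) ∈ ℝ^{N+1} solves A u_t = μ P⁻¹Q(A² u_x) − (1/C) A G(t) u + σ₀ P⁻¹ u_{x,0} e₀ + σ_L P⁻¹ ( u_{t,N} + η a_N² u_{x,N} + (1/C) g_N(t) u_N ) e_N, where u_x = P⁻¹Q u, σ₀ = μ a₀², and σ_L = −μ/η. Then d/dt ( uᵀ √A P √A u + (μ/η) u_N² ) = −2μ ‖A u_x‖²_P − 2 ‖√(G(t)A/C) u‖²_P − 2(μ/(η C)) g_N(t) u_N² ≤ 0. -/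
/-!
Test the scheme, multiplied by `P`, against `u`. Since `Q + Qᵀ = B := diag(-1, 0, …, 0, 1)`,
the diffusion term `μ uᵀ Q (A² u_x)` equals `μ (u_N a_N² u_{x,N} - u₀ a₀² u_{x,0}) - μ ‖A u_x‖²_P`.
The penalty `σ₀ = μ a₀²` cancels the left boundary term and `σ_L = -μ/η` the right one, leaving
`-(μ/η) u_N u_{t,N} - (μ/(ηC)) g_N u_N²`; the first of these is cancelled by the derivative of the
soma term `(μ/η) u_N²` of the energy.
-/

open Matrix

theorem mulVec_nonsing_inv_mul_mulVec {ι κ R : Type*} [Fintype ι] [DecidableEq ι] [Fintype κ]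
    [CommRing R] {P : Matrix ι ι R} (hP : IsUnit P.det) (M : Matrix ι κ R) (x : κ → R) :
    P *ᵥ (P⁻¹ * M) *ᵥ x = M *ᵥ x := by
  rw [mulVec_mulVec, mul_nonsing_inv_cancel_left _ _ hP]

theorem mulVec_nonsing_inv_mulVec {ι R : Type*} [Fintype ι] [DecidableEq ι] [CommRing R]
    {P : Matrix ι ι R} (hP : IsUnit P.det) (x : ι → R) : P *ᵥ P⁻¹ *ᵥ x = x := by
  rw [mulVec_mulVec, mul_nonsing_inv _ hP, one_mulVec]

theorem dotProduct_diagonal_mulVec {ι R : Type*} [Fintype ι] [DecidableEq ι] [CommSemiring R]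
    (p x y : ι → R) : x ⬝ᵥ diagonal p *ᵥ y = ∑ i, p i * x i * y i := by
  simp only [dotProduct, mulVec_diagonal]
  exact Finset.sum_congr rfl fun i _ => by ring

theorem dotProduct_diagonal_mulVec_self_nonneg {ι : Type*} [Fintype ι] [DecidableEq ι]
    {p : ι → ℝ} (hp : 0 ≤ p) (x : ι → ℝ) : 0 ≤ x ⬝ᵥ diagonal p *ᵥ x := by
  simpa using (PosSemidef.diagonal hp).dotProduct_mulVec_nonneg x

theorem dotProduct_diagonal_mulVec_sqrt_mul {ι : Type*} [Fintype ι] [DecidableEq ι]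
    (p c x : ι → ℝ) (hc : ∀ i, 0 ≤ c i) :
    (fun i => √(c i) * x i) ⬝ᵥ diagonal p *ᵥ (fun i => √(c i) * x i)
      = ∑ i, p i * c i * x i ^ 2 := by
  rw [dotProduct_diagonal_mulVec]
  refine Finset.sum_congr rfl fun i _ => ?_
  linear_combination (p i * x i ^ 2) * Real.mul_self_sqrt (hc i)

theorem dotProduct_mulVec_eq_add_transpose_sub {ι R : Type*} [Fintype ι] [CommRing R]
    (Q : Matrix ι ι R) (x w : ι → R) :
    x ⬝ᵥ Q *ᵥ w = x ⬝ᵥ (Q + Qᵀ) *ᵥ w - w ⬝ᵥ Q *ᵥ x := by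
  rw [add_mulVec, dotProduct_add, dotProduct_mulVec x Qᵀ, vecMul_transpose, dotProduct_comm w]
  ring

theorem dotProduct_diagonal_boundary_mulVec {R : Type*} [CommRing R] {n : ℕ} (hn : 0 < n)
    (x w : Fin (n + 1) → R) :
    x ⬝ᵥ diagonal (fun i => if i = 0 then (-1 : R) else if i = Fin.last n then 1 else 0) *ᵥ w
      = x (Fin.last n) * w (Fin.last n) - x 0 * w 0 := by
  have h0 : (0 : Fin (n + 1)) ≠ Fin.last n := by simp [Fin.ext_iff]; omega
  rw [dotProduct_diagonal_mulVec, Fintype.sum_eq_add 0 (Fin.last n) h0 fun i hi => by simp [hi]]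
  simp [h0.symm]
  ring

theorem sbp_dotProduct_mulVec {R : Type*} [CommRing R] {n : ℕ} (hn : 0 < n)
    {Q : Matrix (Fin (n + 1)) (Fin (n + 1)) R}
    (hQ : Q + Qᵀ = diagonal
      (fun i => if i = 0 then (-1 : R) else if i = Fin.last n then 1 else 0))
    (x w : Fin (n + 1) → R) :
    x ⬝ᵥ Q *ᵥ w = x (Fin.last n) * w (Fin.last n) - x 0 * w 0 - w ⬝ᵥ Q *ᵥ x := by
  rw [dotProduct_mulVec_eq_add_transpose_sub, hQ, dotProduct_diagonal_boundary_mulVec hn]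

theorem hasDerivAt_sum_mul_sq {ι : Type*} [Fintype ι] (w : ι → ℝ) {u : ℝ → ι → ℝ}
    {u' : ι → ℝ} {t : ℝ} (hu : ∀ i, HasDerivAt (fun s => u s i) (u' i) t) :
    HasDerivAt (fun s => ∑ i, w i * u s i ^ 2) (2 * ∑ i, w i * u t i * u' i) t := by
  refine (HasDerivAt.fun_sum fun i _ => ((hu i).fun_pow 2).const_mul (w i)).congr_deriv ?_
  rw [Finset.mul_sum]
  refine Finset.sum_congr rfl fun i _ => ?_
  push_cast
  ring

theorem cable_soma_energy_rate {n : ℕ} (hn : 0 < n) {p : Fin (n + 1) → ℝ}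
    {Q : Matrix (Fin (n + 1)) (Fin (n + 1)) ℝ}
    (hQ : Q + Qᵀ = diagonal
      (fun i => if i = 0 then (-1 : ℝ) else if i = Fin.last n then 1 else 0))
    {a g u ux ut : Fin (n + 1) → ℝ} {μ η C : ℝ} (hη : η ≠ 0)
    (hux : Q *ᵥ u = diagonal p *ᵥ ux)
    (hscheme : diagonal p *ᵥ (diagonal a *ᵥ ut)
      = μ • Q *ᵥ (fun i => a i ^ 2 * ux i)
        - (1 / C) • diagonal p *ᵥ (fun i => a i * g i * u i)
        + (μ * a 0 ^ 2 * ux 0) • Pi.single 0 1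
        + (-(μ / η) * (ut (Fin.last n) + η * a (Fin.last n) ^ 2 * ux (Fin.last n)
            + (1 / C) * g (Fin.last n) * u (Fin.last n))) • Pi.single (Fin.last n) 1) :
    ∑ i, p i * a i * u i * ut i + μ / η * u (Fin.last n) * ut (Fin.last n)
      = -μ * ∑ i, p i * (a i * ux i) * (a i * ux i) - ∑ i, p i * (g i * a i / C) * u i ^ 2
        - μ / (η * C) * g (Fin.last n) * u (Fin.last n) ^ 2 := by
  have h := congrArg (u ⬝ᵥ ·) hscheme
  simp only [dotProduct_add, dotProduct_sub, dotProduct_smul, smul_eq_mul, dotProduct_single,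
    mul_one, sbp_dotProduct_mulVec hn hQ, hux, dotProduct_diagonal_mulVec, mulVec_diagonal] at h
  have hkin : ∑ i, p i * (a i ^ 2 * ux i) * ux i = ∑ i, p i * (a i * ux i) * (a i * ux i) :=
    Finset.sum_congr rfl fun i _ => by ring
  have hmass : ∑ i, p i * u i * (a i * ut i) = ∑ i, p i * a i * u i * ut i :=
    Finset.sum_congr rfl fun i _ => by ring
  have hreact :
      1 / C * ∑ i, p i * u i * (a i * g i * u i) = ∑ i, p i * (g i * a i / C) * u i ^ 2 := by
    rw [Finset.mul_sum]
    exact Finset.sum_congr rfl fun i _ => by ring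
  rw [hkin, hmass, hreact] at h
  rw [h]
  field_simp
  ring

/-- Semi-discrete energy estimate (Proposition 4) for the SBP-SAT
discretization of the cable-soma problem, with penalties `σ₀ = μ a₀²` and
`σ_L = −μ/η`. -/
theorem sbp_sat_cable_soma_energy
    (n : ℕ) (hn : 0 < n)
    (p : Fin (n + 1) → ℝ) (hp : ∀ i, 0 < p i)
    (P : Matrix (Fin (n + 1)) (Fin (n + 1)) ℝ) (hPdef : P = Matrix.diagonal p)
    (Q : Matrix (Fin (n + 1)) (Fin (n + 1)) ℝ)
    (hQ : Q + Qᵀ = Matrix.diagonal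
      (fun i => if i = 0 then (-1 : ℝ) else if i = Fin.last n then 1 else 0))
    (a : Fin (n + 1) → ℝ) (ha : ∀ i, 0 < a i)
    (g : ℝ → Fin (n + 1) → ℝ) (gmin : ℝ) (hgmin : 0 < gmin)
    (hg : ∀ t i, gmin ≤ g t i)
    (μ η C : ℝ) (hμ : 0 < μ) (hη : 0 < η) (hC : 0 < C)
    (u ut : ℝ → Fin (n + 1) → ℝ)
    (hut : ∀ t i, HasDerivAt (fun s => u s i) (ut t i) t)
    (hode : ∀ t,
      (Matrix.diagonal a).mulVec (ut t)
        = μ • (P⁻¹ * Q).mulVec (fun i => (a i) ^ 2 * ((P⁻¹ * Q).mulVec (u t)) i)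
          - (1 / C) • (fun i => a i * g t i * u t i)
          + (μ * (a 0) ^ 2 * ((P⁻¹ * Q).mulVec (u t)) 0) •
              P⁻¹.mulVec (Pi.single 0 1)
          + (-(μ / η) * (ut t (Fin.last n)
              + η * (a (Fin.last n)) ^ 2 * ((P⁻¹ * Q).mulVec (u t)) (Fin.last n)
              + (1 / C) * g t (Fin.last n) * u t (Fin.last n))) •
              P⁻¹.mulVec (Pi.single (Fin.last n) 1)) :
    ∀ t,
      HasDerivAt
        (fun s => (fun i => Real.sqrt (a i) * u s i) ⬝ᵥ
            P.mulVec (fun i => Real.sqrt (a i) * u s i)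
          + (μ / η) * (u s (Fin.last n)) ^ 2)
        (- 2 * μ * ((fun i => a i * ((P⁻¹ * Q).mulVec (u t)) i) ⬝ᵥ
            P.mulVec (fun i => a i * ((P⁻¹ * Q).mulVec (u t)) i))
          - 2 * ((fun i => Real.sqrt (g t i * a i / C) * u t i) ⬝ᵥ
            P.mulVec (fun i => Real.sqrt (g t i * a i / C) * u t i))
          - 2 * (μ / (η * C)) * g t (Fin.last n) * (u t (Fin.last n)) ^ 2) t ∧
      (- 2 * μ * ((fun i => a i * ((P⁻¹ * Q).mulVec (u t)) i) ⬝ᵥ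
            P.mulVec (fun i => a i * ((P⁻¹ * Q).mulVec (u t)) i))
          - 2 * ((fun i => Real.sqrt (g t i * a i / C) * u t i) ⬝ᵥ
            P.mulVec (fun i => Real.sqrt (g t i * a i / C) * u t i))
          - 2 * (μ / (η * C)) * g t (Fin.last n) * (u t (Fin.last n)) ^ 2) ≤ 0 := by
  intro t
  subst hPdef
  have hdet : IsUnit (diagonal p).det := by
    simp [isUnit_iff_ne_zero, Finset.prod_ne_zero_iff, fun i => (hp i).ne']
  have hscheme := congrArg (diagonal p *ᵥ ·) (hode t)
  simp only [mulVec_add, mulVec_sub, mulVec_smul, mulVec_nonsing_inv_mul_mulVec hdet,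
    mulVec_nonsing_inv_mulVec hdet] at hscheme
  have hrate := cable_soma_energy_rate hn hQ hη.ne'
    (mulVec_nonsing_inv_mul_mulVec hdet Q (u t)).symm hscheme
  constructor
  · have hga (i) : 0 ≤ g t i * a i / C :=
      div_nonneg (mul_nonneg (hgmin.le.trans (hg t i)) (ha i).le) hC.le
    have hE := (hasDerivAt_sum_mul_sq (fun i => p i * a i) (hut t)).fun_add
      (((hut t (Fin.last n)).fun_pow 2).const_mul (μ / η))
    refine (hE.congr_of_eventuallyEq (.of_forall fun s => ?_)).congr_deriv ?_
    · rw [dotProduct_diagonal_mulVec_sqrt_mul _ _ _ fun i => (ha i).le]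
    · rw [dotProduct_diagonal_mulVec, dotProduct_diagonal_mulVec_sqrt_mul _ _ _ hga]
      push_cast
      linear_combination 2 * hrate
  · have hp0 : 0 ≤ p := fun i => (hp i).le
    have hkin := dotProduct_diagonal_mulVec_self_nonneg hp0
      (fun i => a i * (((diagonal p)⁻¹ * Q) *ᵥ u t) i)
    have hreact := dotProduct_diagonal_mulVec_self_nonneg hp0 (fun i => √(g t i * a i / C) * u t i)
    have hsoma : 0 ≤ μ / (η * C) * g t (Fin.last n) * u t (Fin.last n) ^ 2 := by
      have := hgmin.le.trans (hg t (Fin.last n))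
      positivity
    nlinarith
end

section
/- With the SBP-SAT semi-discretization of the cable-soma problem (penalty coefficients σ₀ = μ a₀² and σ_L = −μ/η) the discrete weighted energy E(t) = ‖√A u‖²_P + (μ/η) u_N² is nonincreasing in time; consequently the scheme is stable: ‖√A u(t)‖²_P ≤ E(0) for all t ≥ 0. -/
/-!
Multiply the scheme by `P u` and use summation by parts, `Q + Qᵀ = diag(-1, 0, …, 0, 1)`: the
interior operator `μ D A² D` contributes `-μ ‖A D u‖²_P ≤ 0` plus the boundary terms
`μ (u_N w_N - u_0 w_0)` with `w = A² D u`. The penalty at the sealed end is chosen to cancel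
`u_0 w_0`; the penalty at the soma cancels `u_N w_N` and produces `-(μ/η) u_N ∂ₜu_N`, which is
exactly what the extra energy term `(μ/η) u_N²` absorbs. What remains, the membrane and soma
leak terms, is nonpositive because `g ≥ 0`.
-/

open Matrix Finset

theorem Matrix.dotProduct_mulVec_add_mulVec_dotProduct {ι R : Type*} [Fintype ι] [DecidableEq ι]
    [CommRing R] {Q : Matrix ι ι R} {d : ι → R}
    (hQ : Q + Qᵀ = diagonal d) (u w : ι → R) :
    u ⬝ᵥ Q *ᵥ w + Q *ᵥ u ⬝ᵥ w = ∑ i, d i * (u i * w i) := by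
  rw [← vecMul_transpose Q u, ← dotProduct_mulVec, ← dotProduct_add, ← add_mulVec, hQ]
  simp only [dotProduct, mulVec_diagonal]
  exact sum_congr rfl fun i _ => by ring

theorem Fin.sum_boundary_weight_mul {R : Type*} [CommRing R] {n : ℕ} (hn : 0 < n)
    (f : Fin (n + 1) → R) :
    ∑ i, (if i = 0 then -1 else if i = Fin.last n then 1 else 0) * f i = f (Fin.last n) - f 0 := by
  have h0 : (0 : Fin (n + 1)) ≠ Fin.last n := by simp [Fin.ext_iff]; omega
  simp only [ite_mul, neg_one_mul, one_mul, zero_mul]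
  rw [Fintype.sum_eq_add _ _ h0]
  · simp [h0.symm]; ring
  · intro i hi; simp [hi.1, hi.2]

theorem Matrix.diagonal_inv_mulVec {K ι : Type*} [Fintype ι] [DecidableEq ι] [Field K]
    {p : ι → K} (hp : ∀ i, p i ≠ 0) (x : ι → K) : (diagonal p)⁻¹ *ᵥ x = fun i => x i / p i := by
  have hinv : (diagonal p)⁻¹ = diagonal fun i => (p i)⁻¹ :=
    inv_eq_right_inv <| by rw [diagonal_mul_diagonal, ← diagonal_one]; simp [hp]
  ext i
  rw [hinv, mulVec_diagonal, div_eq_inv_mul]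

theorem sqrt_mul_dotProduct_diagonal_mulVec {ι : Type*} [Fintype ι] [DecidableEq ι]
    {a : ι → ℝ} (ha : ∀ i, 0 ≤ a i) (p u : ι → ℝ) :
    (fun i => √(a i) * u i) ⬝ᵥ diagonal p *ᵥ (fun i => √(a i) * u i)
      = ∑ i, p i * a i * u i ^ 2 := by
  simp only [dotProduct, mulVec_diagonal]
  refine sum_congr rfl fun i _ => ?_
  linear_combination p i * u i ^ 2 * Real.mul_self_sqrt (ha i)

section Energy

variable {ι : Type*} [Fintype ι]

/-- `‖√A u‖²_P + κ u_N²` for `P = diag p`, `A = diag a`. -/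
def cableEnergy (p a : ι → ℝ) (κ : ℝ) (N : ι) (u : ι → ℝ) : ℝ :=
  ∑ i, p i * a i * u i ^ 2 + κ * u N ^ 2

theorem hasDerivAt_cableEnergy (p a : ι → ℝ) (κ : ℝ) (N : ι) {u : ℝ → ι → ℝ} {ut : ι → ℝ}
    {t : ℝ} (hu : ∀ i, HasDerivAt (fun s => u s i) (ut i) t) :
    HasDerivAt (fun s => cableEnergy p a κ N (u s))
      (2 * (∑ i, p i * a i * u t i * ut i + κ * u t N * ut N)) t := by
  have hsq : ∀ i, HasDerivAt (fun s => u s i ^ 2) (2 * u t i * ut i) t := fun i => by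
    simpa using (hu i).fun_pow 2
  refine ((HasDerivAt.fun_sum fun i _ => (hsq i).const_mul (p i * a i)).add
    ((hsq N).const_mul κ)).congr_deriv ?_
  rw [mul_add, mul_sum]
  congr 1
  · exact sum_congr rfl fun i _ => by ring
  · ring

end Energy

section CableSoma

variable {n : ℕ}

/-- Right-hand side of `A u_t = μ D (A² D u) − (1/C) A G u + SAT₀ + SAT_L` with `D = P⁻¹ Q`,
SAT penalties `σ₀ = μ a₀²` at the sealed end and `σ_L = −μ/η` at the soma; the soma penalty
involves `∂ₜ u_N`, hence the argument `ut`. -/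
noncomputable def cableSomaRHS (P Q : Matrix (Fin (n + 1)) (Fin (n + 1)) ℝ)
    (a g : Fin (n + 1) → ℝ) (μ η C : ℝ) (u ut : Fin (n + 1) → ℝ) : Fin (n + 1) → ℝ :=
  μ • (P⁻¹ * Q).mulVec (fun i => (a i) ^ 2 * ((P⁻¹ * Q).mulVec u) i)
    - (1 / C) • (fun i => a i * g i * u i)
    + (μ * (a 0) ^ 2 * ((P⁻¹ * Q).mulVec u) 0) • P⁻¹.mulVec (Pi.single 0 1)
    + (-(μ / η) * (ut (Fin.last n)
        + η * (a (Fin.last n)) ^ 2 * ((P⁻¹ * Q).mulVec u) (Fin.last n)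
        + (1 / C) * g (Fin.last n) * u (Fin.last n))) •
        P⁻¹.mulVec (Pi.single (Fin.last n) 1)

variable {p a g u ut : Fin (n + 1) → ℝ} {Q : Matrix (Fin (n + 1)) (Fin (n + 1)) ℝ} {μ η C : ℝ}

theorem cableSoma_energy_rate_eq (hn : 0 < n) (hp : ∀ i, p i ≠ 0)
    (hQ : Q + Qᵀ = diagonal fun i => if i = 0 then -1 else if i = Fin.last n then 1 else 0)
    (hη : η ≠ 0) (hode : diagonal a *ᵥ ut = cableSomaRHS (diagonal p) Q a g μ η C u ut) :
    ∑ i, p i * a i * u i * ut i + μ / η * u (Fin.last n) * ut (Fin.last n)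
      = -(μ * ∑ i, a i ^ 2 * (Q *ᵥ u) i ^ 2 / p i) - (∑ i, p i * a i * g i * u i ^ 2) / C
        - μ / (η * C) * g (Fin.last n) * u (Fin.last n) ^ 2 := by
  set N := Fin.last n
  set w : Fin (n + 1) → ℝ := fun i => a i ^ 2 * ((Q *ᵥ u) i / p i)
  have hDu : ((diagonal p)⁻¹ * Q) *ᵥ u = fun i => (Q *ᵥ u) i / p i := by
    rw [← mulVec_mulVec, diagonal_inv_mulVec hp]
  have hrow : (fun i => p i * a i * ut i)
      = μ • Q *ᵥ w - (1 / C) • (fun i => p i * a i * g i * u i) + (μ * w 0) • Pi.single 0 1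
      + (-(μ / η) * (ut N + η * w N + (1 / C) * g N * u N)) • Pi.single N 1 := by
    ext i
    have := congrFun hode i
    simp only [cableSomaRHS, hDu, ← mulVec_mulVec, diagonal_inv_mulVec hp, mulVec_diagonal,
      Pi.add_apply, Pi.sub_apply, Pi.smul_apply, smul_eq_mul] at this ⊢
    rw [mul_assoc, this]
    simp only [w, N]
    field_simp [hp i]
  have hsum := congrArg (u ⬝ᵥ ·) hrow
  simp only [dotProduct_add, dotProduct_sub, dotProduct_smul, dotProduct_single, smul_eq_mul]
    at hsum
  have hsbp := dotProduct_mulVec_add_mulVec_dotProduct hQ u w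
  rw [Fin.sum_boundary_weight_mul hn (fun i => u i * w i)] at hsbp
  have hrate : u ⬝ᵥ (fun i => p i * a i * ut i) = ∑ i, p i * a i * u i * ut i :=
    sum_congr rfl fun i _ => by ring
  have hdiss : u ⬝ᵥ (fun i => p i * a i * g i * u i) = ∑ i, p i * a i * g i * u i ^ 2 :=
    sum_congr rfl fun i _ => by ring
  have hgrad : Q *ᵥ u ⬝ᵥ w = ∑ i, a i ^ 2 * (Q *ᵥ u) i ^ 2 / p i :=
    sum_congr rfl fun i _ => by simp only [w]; ring
  rw [hrate, hdiss] at hsum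
  rw [hgrad] at hsbp
  simp only [w] at hsum hsbp
  linear_combination hsum + μ * hsbp
    - μ * u N * (a N ^ 2 * ((Q *ᵥ u) N / p N)) * mul_inv_cancel₀ hη

theorem cableSoma_energy_rate_nonpos (hn : 0 < n) (hp : ∀ i, 0 < p i)
    (hQ : Q + Qᵀ = diagonal fun i => if i = 0 then -1 else if i = Fin.last n then 1 else 0)
    (ha : ∀ i, 0 ≤ a i) (hg : ∀ i, 0 ≤ g i) (hμ : 0 ≤ μ) (hη : 0 < η) (hC : 0 ≤ C)
    (hode : diagonal a *ᵥ ut = cableSomaRHS (diagonal p) Q a g μ η C u ut) :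
    ∑ i, p i * a i * u i * ut i + μ / η * u (Fin.last n) * ut (Fin.last n) ≤ 0 := by
  rw [cableSoma_energy_rate_eq hn (fun i => (hp i).ne') hQ hη.ne' hode]
  have hgrad : 0 ≤ ∑ i, a i ^ 2 * (Q *ᵥ u) i ^ 2 / p i :=
    sum_nonneg fun i _ => div_nonneg (by positivity) (hp i).le
  have hdiss : 0 ≤ ∑ i, p i * a i * g i * u i ^ 2 :=
    sum_nonneg fun i _ => by have := (hp i).le; have := ha i; have := hg i; positivity
  have hsoma : 0 ≤ μ / (η * C) * g (Fin.last n) * u (Fin.last n) ^ 2 := by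
    have := hg (Fin.last n); positivity
  linarith [mul_nonneg hμ hgrad, div_nonneg hdiss hC]

end CableSoma

/-- Stability of the SBP-SAT scheme for the cable-soma problem: with penalties
`σ₀ = μ a₀²`, `σ_L = −μ/η`, the discrete weighted energy
`E(t) = ‖√A u‖²_P + (μ/η) u_N²` is nonincreasing on `t ≥ 0`, and consequently
`‖√A u(t)‖²_P ≤ E(0)` for all `t ≥ 0`. -/
theorem sbp_sat_cable_soma_stability
    (n : ℕ) (hn : 0 < n)
    (p : Fin (n + 1) → ℝ) (hp : ∀ i, 0 < p i)
    (P : Matrix (Fin (n + 1)) (Fin (n + 1)) ℝ) (hPdef : P = Matrix.diagonal p)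
    (Q : Matrix (Fin (n + 1)) (Fin (n + 1)) ℝ)
    (hQ : Q + Qᵀ = Matrix.diagonal
      (fun i => if i = 0 then (-1 : ℝ) else if i = Fin.last n then 1 else 0))
    (a : Fin (n + 1) → ℝ) (ha : ∀ i, 0 < a i)
    (g : ℝ → Fin (n + 1) → ℝ) (gmin : ℝ) (hgmin : 0 < gmin)
    (hg : ∀ t i, gmin ≤ g t i)
    (μ η C : ℝ) (hμ : 0 < μ) (hη : 0 < η) (hC : 0 < C)
    (u ut : ℝ → Fin (n + 1) → ℝ)
    (hut : ∀ t i, HasDerivAt (fun s => u s i) (ut t i) t)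
    (hode : ∀ t,
      (Matrix.diagonal a).mulVec (ut t)
        = μ • (P⁻¹ * Q).mulVec (fun i => (a i) ^ 2 * ((P⁻¹ * Q).mulVec (u t)) i)
          - (1 / C) • (fun i => a i * g t i * u t i)
          + (μ * (a 0) ^ 2 * ((P⁻¹ * Q).mulVec (u t)) 0) •
              P⁻¹.mulVec (Pi.single 0 1)
          + (-(μ / η) * (ut t (Fin.last n)
              + η * (a (Fin.last n)) ^ 2 * ((P⁻¹ * Q).mulVec (u t)) (Fin.last n)
              + (1 / C) * g t (Fin.last n) * u t (Fin.last n))) •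
              P⁻¹.mulVec (Pi.single (Fin.last n) 1)) :
    AntitoneOn
      (fun s => (fun i => Real.sqrt (a i) * u s i) ⬝ᵥ
          P.mulVec (fun i => Real.sqrt (a i) * u s i)
        + (μ / η) * (u s (Fin.last n)) ^ 2) (Set.Ici 0) ∧
    ∀ t ≥ (0:ℝ),
      (fun i => Real.sqrt (a i) * u t i) ⬝ᵥ
          P.mulVec (fun i => Real.sqrt (a i) * u t i)
        ≤ (fun i => Real.sqrt (a i) * u 0 i) ⬝ᵥ
            P.mulVec (fun i => Real.sqrt (a i) * u 0 i)
          + (μ / η) * (u 0 (Fin.last n)) ^ 2 := by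
  subst hPdef
  have ha₀ : ∀ i, 0 ≤ a i := fun i => (ha i).le
  have hdecay : Antitone fun s => cableEnergy p a (μ / η) (Fin.last n) (u s) :=
    antitone_of_hasDerivAt_nonpos (fun t => hasDerivAt_cableEnergy p a _ _ (hut t)) fun t => by
      have := cableSoma_energy_rate_nonpos hn hp hQ ha₀ (fun i => hgmin.le.trans (hg t i))
        hμ.le hη hC.le (hode t)
      simp only [Pi.zero_apply]
      linarith
  simp only [sqrt_mul_dotProduct_diagonal_mulVec ha₀]
  refine ⟨hdecay.antitoneOn _, fun t ht => ?_⟩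
  have hsoma : 0 ≤ μ / η * u t (Fin.last n) ^ 2 := by positivity
  have := hdecay ht
  simp only [cableEnergy] at this
  linarith
end
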